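/- arXiv:1504.04489 — 3 statements merged into one kernel-verified Lean document; each statement's English description precedes it below -/
import Mathlib

section
/- Under the clustered Gaussian regression model, for any two indices i ≠ j the marginal covariance of the responses is Cov(y_i, y_j) = (x_iᵀ T x_j) · P(c_i = c_j). -/
/-!
Write `y r = Z r (c r)` with `Z r h = x rᵀ β h + ε r`. Because the labels are independent of
`(β, ε)`, `E[y i * y j]` is the average, over the law of `(c i, c j)`, of `E[Z i h * Z j h']`.
The noise is centred and independent of the rest, distinct clusters are independent, and
polarizing `Var(aᵀ β h) = aᵀ T a` gives `Cov(aᵀ β h, bᵀ β h) = aᵀ T b`; hence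
`E[Z i h * Z j h'] = [h = h'] xᵢᵀ T xⱼ + mᵢ mⱼ` with `m r = x rᵀ μ`. Likewise `E[y r] = m r`,
and the products of means cancel.
-/

open MeasureTheory ProbabilityTheory

/-- Covariance of two real random variables. -/
noncomputable def cov {Ω : Type*} [MeasurableSpace Ω] (P : Measure Ω) (f g : Ω → ℝ) : ℝ :=
  (∫ ω, f ω * g ω ∂P) - (∫ ω, f ω ∂P) * (∫ ω, g ω ∂P)

open Matrix
open scoped NNReal

lemma Matrix.sum_sum_mul_mul_eq_dotProduct_mulVec {ι R : Type*} [Fintype ι] [CommSemiring R]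
    (T : Matrix ι ι R) (a b : ι → R) : ∑ l, ∑ m, a l * T l m * b m = a ⬝ᵥ T *ᵥ b := by
  simp [dotProduct, mulVec, Finset.mul_sum, mul_assoc]

lemma Matrix.IsSymm.dotProduct_mulVec_comm {ι R : Type*} [Fintype ι] [CommSemiring R]
    {T : Matrix ι ι R} (hT : T.IsSymm) (a b : ι → R) : b ⬝ᵥ T *ᵥ a = a ⬝ᵥ T *ᵥ b := by
  rw [dotProduct_mulVec, ← mulVec_transpose, hT.eq, dotProduct_comm]

section GaussianReal

variable {Ω : Type*} [MeasurableSpace Ω] {P : Measure Ω} {X : Ω → ℝ} {m : ℝ} {v : ℝ≥0}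

lemma hasLaw_of_map_eq {𝓧 : Type*} [MeasurableSpace 𝓧] {μ : Measure 𝓧} [NeZero μ] {Y : Ω → 𝓧}
    (h : P.map Y = μ) : HasLaw Y μ P :=
  ⟨AEMeasurable.of_map_ne_zero (h ▸ NeZero.ne μ), h⟩

lemma memLp_two_of_map_eq_gaussianReal (h : P.map X = gaussianReal m v) : MemLp X 2 P :=
  HasGaussianLaw.memLp_two ⟨by rw [h]; infer_instance⟩

lemma integral_of_map_eq_gaussianReal (h : P.map X = gaussianReal m v) : P[X] = m := by
  rw [(hasLaw_of_map_eq h).integral_eq, integral_id_gaussianReal]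

lemma variance_of_map_eq_gaussianReal (h : P.map X = gaussianReal m v) : Var[X; P] = v := by
  rw [(hasLaw_of_map_eq h).variance_eq, variance_id_gaussianReal]

end GaussianReal

section GaussianVector

variable {Ω ι : Type*} [MeasurableSpace Ω] {P : Measure Ω} [IsProbabilityMeasure P] [Fintype ι]
  {μ : ι → ℝ} {T : Matrix ι ι ℝ}

lemma covariance_dotProduct_of_map_eq_gaussianReal {V : Ω → ι → ℝ} (hT : T.PosSemidef)
    (hV : ∀ a, P.map (fun ω ↦ a ⬝ᵥ V ω) = gaussianReal (a ⬝ᵥ μ) (a ⬝ᵥ T *ᵥ a).toNNReal)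
    (a b : ι → ℝ) :
    cov[fun ω ↦ a ⬝ᵥ V ω, fun ω ↦ b ⬝ᵥ V ω; P] = a ⬝ᵥ T *ᵥ b := by
  have hvar (c : ι → ℝ) : Var[fun ω ↦ c ⬝ᵥ V ω; P] = c ⬝ᵥ T *ᵥ c := by
    rw [variance_of_map_eq_gaussianReal (hV c), Real.coe_toNNReal _
      (by simpa using hT.dotProduct_mulVec_nonneg c)]
  have hsum := variance_add (memLp_two_of_map_eq_gaussianReal (hV a))
    (memLp_two_of_map_eq_gaussianReal (hV b))
  have hab : (fun ω ↦ a ⬝ᵥ V ω) + (fun ω ↦ b ⬝ᵥ V ω) = fun ω ↦ (a + b) ⬝ᵥ V ω := by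
    ext ω; simp [add_dotProduct]
  rw [hab, hvar, hvar, hvar, mulVec_add, dotProduct_add, add_dotProduct, add_dotProduct,
    (isHermitian_iff_isSymm.1 hT.isHermitian).dotProduct_mulVec_comm a b] at hsum
  linarith

lemma integral_dotProduct_mul_dotProduct_of_map_eq_gaussianReal {V : Ω → ι → ℝ}
    (hT : T.PosSemidef)
    (hV : ∀ a, P.map (fun ω ↦ a ⬝ᵥ V ω) = gaussianReal (a ⬝ᵥ μ) (a ⬝ᵥ T *ᵥ a).toNNReal)
    (a b : ι → ℝ) :
    ∫ ω, (a ⬝ᵥ V ω) * (b ⬝ᵥ V ω) ∂P = a ⬝ᵥ T *ᵥ b + (a ⬝ᵥ μ) * (b ⬝ᵥ μ) := by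
  have h := covariance_eq_sub (memLp_two_of_map_eq_gaussianReal (hV a))
    (memLp_two_of_map_eq_gaussianReal (hV b))
  rw [covariance_dotProduct_of_map_eq_gaussianReal hT hV, integral_of_map_eq_gaussianReal (hV a),
    integral_of_map_eq_gaussianReal (hV b)] at h
  simp only [Pi.mul_apply] at h
  linarith

lemma integral_dotProduct_mul_dotProduct_of_iIndepFun {κ : Type*} [DecidableEq κ]
    {β : κ → Ω → ι → ℝ} (hT : T.PosSemidef) (hind : iIndepFun β P)
    (hβ : ∀ h a, P.map (fun ω ↦ a ⬝ᵥ β h ω) = gaussianReal (a ⬝ᵥ μ) (a ⬝ᵥ T *ᵥ a).toNNReal)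
    (a b : ι → ℝ) (h h' : κ) :
    ∫ ω, (a ⬝ᵥ β h ω) * (b ⬝ᵥ β h' ω) ∂P
      = (if h = h' then a ⬝ᵥ T *ᵥ b else 0) + (a ⬝ᵥ μ) * (b ⬝ᵥ μ) := by
  rcases eq_or_ne h h' with rfl | hne
  · rw [if_pos rfl, integral_dotProduct_mul_dotProduct_of_map_eq_gaussianReal hT (hβ h)]
  · have hind' : (fun ω ↦ a ⬝ᵥ β h ω) ⟂ᵢ[P] fun ω ↦ b ⬝ᵥ β h' ω :=
      (hind.indepFun hne).comp (φ := (a ⬝ᵥ ·)) (ψ := (b ⬝ᵥ ·)) (by fun_prop) (by fun_prop)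
    rw [if_neg hne, zero_add, hind'.integral_fun_mul_eq_mul_integral
      (memLp_two_of_map_eq_gaussianReal (hβ h a)).1 (memLp_two_of_map_eq_gaussianReal (hβ h' b)).1,
      integral_of_map_eq_gaussianReal (hβ h a), integral_of_map_eq_gaussianReal (hβ h' b)]

end GaussianVector

section Independence

variable {Ω : Type*} [MeasurableSpace Ω] {P : Measure Ω}

lemma indepFun_of_map_eq_prod_prod [IsProbabilityMeasure P] {α β γ : Type*} [MeasurableSpace α]
    [MeasurableSpace β] [MeasurableSpace γ] {X : Ω → α} {Y : Ω → β} {Z : Ω → γ}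
    (hX : Measurable X) (hY : Measurable Y) (hZ : Measurable Z)
    (h : P.map (fun ω ↦ (X ω, Y ω, Z ω)) = (P.map X).prod ((P.map Y).prod (P.map Z))) :
    X ⟂ᵢ[P] (fun ω ↦ (Y ω, Z ω)) ∧ Y ⟂ᵢ[P] Z := by
  have hYZ : P.map (fun ω ↦ (Y ω, Z ω)) = (P.map Y).prod (P.map Z) := by
    have : IsProbabilityMeasure (P.map X) := Measure.isProbabilityMeasure_map hX.aemeasurable
    rw [← Measure.snd_prod (μ := P.map X) (ν := (P.map Y).prod (P.map Z)), ← h, Measure.snd,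
      Measure.map_map measurable_snd (hX.prodMk (hY.prodMk hZ))]
    rfl
  refine ⟨?_, ?_⟩
  · rwa [indepFun_iff_map_prod_eq_prod_map_map hX.aemeasurable (hY.prodMk hZ).aemeasurable, hYZ]
  · rwa [indepFun_iff_map_prod_eq_prod_map_map hY.aemeasurable hZ.aemeasurable]

lemma integral_add_mul_add_of_indepFun {U V e e' : Ω → ℝ} (hU : MemLp U 2 P) (hV : MemLp V 2 P)
    (he : MemLp e 2 P) (he' : MemLp e' 2 P) (hUe' : U ⟂ᵢ[P] e') (heV : e ⟂ᵢ[P] V)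
    (hee' : e ⟂ᵢ[P] e') (he₀ : P[e] = 0) (he'₀ : P[e'] = 0) :
    ∫ ω, (U ω + e ω) * (V ω + e' ω) ∂P = ∫ ω, U ω * V ω ∂P := by
  have hUV_int : Integrable (U * V) P := hU.integrable_mul hV
  have hUe'_int : Integrable (U * e') P := hU.integrable_mul he'
  have heV_int : Integrable (e * V) P := he.integrable_mul hV
  have hee'_int : Integrable (e * e') P := he.integrable_mul he'
  have hexpand : (fun ω ↦ (U ω + e ω) * (V ω + e' ω)) = U * V + U * e' + e * V + e * e' := by
    ext ω; simp only [Pi.add_apply, Pi.mul_apply]; ring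
  rw [hexpand, integral_add' ((hUV_int.add hUe'_int).add heV_int) hee'_int,
    integral_add' (hUV_int.add hUe'_int) heV_int, integral_add' hUV_int hUe'_int,
    hUe'.integral_mul_eq_mul_integral hU.1 he'.1, heV.integral_mul_eq_mul_integral he.1 hV.1,
    hee'.integral_mul_eq_mul_integral he.1 he'.1, he₀, he'₀]
  simp

lemma integral_dotProduct_add_mul_dotProduct_add_of_indepFun [IsProbabilityMeasure P]
    {ι κ ν : Type*} [Fintype ι] [DecidableEq κ] {β : κ → Ω → ι → ℝ} {ε : ν → Ω → ℝ}
    {μ : ι → ℝ} {T : Matrix ι ι ℝ} (hT : T.PosSemidef) (hβind : iIndepFun β P)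
    (hβ : ∀ h a, P.map (fun ω ↦ a ⬝ᵥ β h ω) = gaussianReal (a ⬝ᵥ μ) (a ⬝ᵥ T *ᵥ a).toNNReal)
    (hεind : iIndepFun ε P) (hε : ∀ r, MemLp (ε r) 2 P) (hε₀ : ∀ r, P[ε r] = 0)
    (hβε : (fun ω h ↦ β h ω) ⟂ᵢ[P] fun ω r ↦ ε r ω) {r r' : ν} (hrr' : r ≠ r')
    (a b : ι → ℝ) (h h' : κ) :
    ∫ ω, (a ⬝ᵥ β h ω + ε r ω) * (b ⬝ᵥ β h' ω + ε r' ω) ∂P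
      = (if h = h' then a ⬝ᵥ T *ᵥ b else 0) + (a ⬝ᵥ μ) * (b ⬝ᵥ μ) := by
  have hβε' : (fun ω ↦ a ⬝ᵥ β h ω) ⟂ᵢ[P] ε r' :=
    hβε.comp (φ := fun z : κ → ι → ℝ ↦ a ⬝ᵥ z h) (ψ := fun e : ν → ℝ ↦ e r') (by fun_prop)
      (measurable_pi_apply r')
  have hεβ' : ε r ⟂ᵢ[P] fun ω ↦ b ⬝ᵥ β h' ω :=
    hβε.symm.comp (φ := fun e : ν → ℝ ↦ e r) (ψ := fun z : κ → ι → ℝ ↦ b ⬝ᵥ z h')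
      (measurable_pi_apply r) (by fun_prop)
  rw [integral_add_mul_add_of_indepFun (memLp_two_of_map_eq_gaussianReal (hβ h a))
    (memLp_two_of_map_eq_gaussianReal (hβ h' b)) (hε r) (hε r') hβε' hεβ' (hεind.indepFun hrr')
    (hε₀ r) (hε₀ r'), integral_dotProduct_mul_dotProduct_of_iIndepFun hT hβind hβ]

end Independence

section Mixture

variable {Ω κ : Type*} [MeasurableSpace Ω] {P : Measure Ω} [Fintype κ] [MeasurableSpace κ]
  [MeasurableSingletonClass κ]

lemma integral_eval_eq_sum_of_indepFun {L : Ω → κ} {Z : κ → Ω → ℝ} (hL : Measurable L)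
    (hLZ : L ⟂ᵢ[P] fun ω h ↦ Z h ω) (hZ : ∀ h, Integrable (Z h) P) :
    ∫ ω, Z (L ω) ω ∂P = ∑ h, P.real (L ⁻¹' {h}) * ∫ ω, Z h ω ∂P := by
  have hsplit : (fun ω ↦ Z (L ω) ω)
      = fun ω ↦ ∑ h, ({h} : Set κ).indicator 1 (L ω) * Z h ω := by
    ext ω
    rw [Finset.sum_eq_single (L ω) (fun h _ hne ↦ by simp [Ne.symm hne]) (by simp)]
    simp
  have hterm (h : κ) : ∫ ω, ({h} : Set κ).indicator 1 (L ω) * Z h ω ∂P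
      = P.real (L ⁻¹' {h}) * ∫ ω, Z h ω ∂P := by
    rw [hLZ.integral_fun_comp_mul_comp (f := ({h} : Set κ).indicator 1) (g := fun z ↦ z h)
      hL.aemeasurable (by fun_prop) (by fun_prop) (measurable_pi_apply h).aestronglyMeasurable]
    congr 1
    exact integral_indicator_one (hL (measurableSet_singleton h))
  rw [hsplit, integral_finsetSum _ fun h _ ↦ ?_]
  · exact Finset.sum_congr rfl fun h _ ↦ hterm h
  · refine (hZ h).bdd_mul (c := 1) ?_ (ae_of_all _ fun ω ↦ ?_)
    · exact (measurable_const.indicator (measurableSet_singleton h)).comp hL |>.aestronglyMeasurable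
    · by_cases hω : L ω = h <;> simp [hω]

variable [IsProbabilityMeasure P]

lemma integral_eval_eq_integral_integral_of_indepFun {L : Ω → κ} {Z : κ → Ω → ℝ}
    (hL : Measurable L) (hLZ : L ⟂ᵢ[P] fun ω h ↦ Z h ω) (hZ : ∀ h, Integrable (Z h) P) :
    ∫ ω, Z (L ω) ω ∂P = ∫ ω, (∫ ω', Z (L ω) ω' ∂P) ∂P := by
  rw [integral_eval_eq_sum_of_indepFun hL hLZ hZ, integral_eval_eq_sum_of_indepFun hL
    (indepFun_const_right L fun h ↦ ∫ ω', Z h ω' ∂P) fun h ↦ integrable_const _]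
  simp

theorem cov_eval_eval_of_indepFun [DecidableEq κ] {L₁ L₂ : Ω → κ} {Z₁ Z₂ : κ → Ω → ℝ}
    {m₁ m₂ s : ℝ} (hL₁ : Measurable L₁) (hL₂ : Measurable L₂)
    (hLZ : (fun ω ↦ (L₁ ω, L₂ ω)) ⟂ᵢ[P] fun ω ↦ (fun h ↦ Z₁ h ω, fun h ↦ Z₂ h ω))
    (hZ₁ : ∀ h, Integrable (Z₁ h) P) (hZ₂ : ∀ h, Integrable (Z₂ h) P)
    (hZ₁₂ : ∀ h h', Integrable (fun ω ↦ Z₁ h ω * Z₂ h' ω) P)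
    (hm₁ : ∀ h, ∫ ω, Z₁ h ω ∂P = m₁) (hm₂ : ∀ h, ∫ ω, Z₂ h ω ∂P = m₂)
    (hs : ∀ h h', ∫ ω, Z₁ h ω * Z₂ h' ω ∂P = (if h = h' then s else 0) + m₁ * m₂) :
    cov P (fun ω ↦ Z₁ (L₁ ω) ω) (fun ω ↦ Z₂ (L₂ ω) ω) = s * P.real {ω | L₁ ω = L₂ ω} := by
  have hmean₁ : ∫ ω, Z₁ (L₁ ω) ω ∂P = m₁ := by
    have hind : L₁ ⟂ᵢ[P] fun ω h ↦ Z₁ h ω :=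
      hLZ.comp (φ := Prod.fst) (ψ := Prod.fst) measurable_fst measurable_fst
    rw [integral_eval_eq_integral_integral_of_indepFun hL₁ hind hZ₁]
    simp [hm₁]
  have hmean₂ : ∫ ω, Z₂ (L₂ ω) ω ∂P = m₂ := by
    have hind : L₂ ⟂ᵢ[P] fun ω h ↦ Z₂ h ω :=
      hLZ.comp (φ := Prod.snd) (ψ := Prod.snd) measurable_snd measurable_snd
    rw [integral_eval_eq_integral_integral_of_indepFun hL₂ hind hZ₂]
    simp [hm₂]
  have hsecond : ∫ ω, Z₁ (L₁ ω) ω * Z₂ (L₂ ω) ω ∂P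
      = s * P.real {ω | L₁ ω = L₂ ω} + m₁ * m₂ := by
    have hind : (fun ω ↦ (L₁ ω, L₂ ω)) ⟂ᵢ[P] fun ω (p : κ × κ) ↦ Z₁ p.1 ω * Z₂ p.2 ω :=
      hLZ.comp (φ := id) (ψ := fun (z : (κ → ℝ) × (κ → ℝ)) (p : κ × κ) ↦ z.1 p.1 * z.2 p.2)
        measurable_id (by fun_prop)
    rw [integral_eval_eq_integral_integral_of_indepFun (L := fun ω ↦ (L₁ ω, L₂ ω))
      (Z := fun p ω ↦ Z₁ p.1 ω * Z₂ p.2 ω) (hL₁.prodMk hL₂) hind fun p ↦ hZ₁₂ p.1 p.2]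
    have hsame : MeasurableSet {ω | L₁ ω = L₂ ω} := measurableSet_eq_fun hL₁ hL₂
    have hite (ω : Ω) :
        (if L₁ ω = L₂ ω then s else 0) = {ω | L₁ ω = L₂ ω}.indicator (fun _ ↦ s) ω := by
      simp [Set.indicator_apply]
    simp only [hs, hite]
    rw [integral_add ((integrable_const s).indicator hsame) (integrable_const _),
      integral_indicator_const s hsame]
    simp [mul_comm]
  rw [cov, hsecond, hmean₁, hmean₂]
  ring

end Mixture

theorem covariance_clustered_regression_general
    {Ω : Type*} [MeasurableSpace Ω] (P : Measure Ω) [IsProbabilityMeasure P]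
    (n k p : ℕ)
    -- random cluster labels
    (c : Fin n → Ω → Fin k) (hc : ∀ i, Measurable (c i))
    -- cluster-specific Gaussian coefficient vectors
    (β : Fin k → Ω → (Fin p → ℝ)) (hβ : ∀ h, Measurable (β h))
    -- Gaussian errors
    (ε : Fin n → Ω → ℝ) (hε : ∀ i, Measurable (ε i))
    (μv : Fin p → ℝ) (T : Matrix (Fin p) (Fin p) ℝ) (hT : T.PosSemidef)
    (σ : ℝ)
    -- the β*'s are i.i.d. Gaussian with mean μv and covariance T :
    -- independent, identically distributed, and every linear functional is Gaussian
    (hβindep : iIndepFun β P)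
    (hβgauss : ∀ h (a : Fin p → ℝ),
      Measure.map (fun ω => ∑ l, a l * β h ω l) P
        = gaussianReal (∑ l, a l * μv l)
            (Real.toNNReal (∑ l, ∑ m, a l * T l m * a m)))
    -- the ε's are i.i.d. N(0, σ²)
    (hεindep : iIndepFun ε P)
    (hεgauss : ∀ i, Measure.map (ε i) P = gaussianReal 0 (Real.toNNReal (σ ^ 2)))
    -- the label vector, the β family and the ε family are mutually independent
    (hmut : Measure.map
        (fun ω => ((fun i => c i ω, fun h => β h ω, fun i => ε i ω) :
          (Fin n → Fin k) × (Fin k → Fin p → ℝ) × (Fin n → ℝ))) P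
      = (Measure.map (fun ω (i : Fin n) => c i ω) P).prod
          ((Measure.map (fun ω (h : Fin k) => β h ω) P).prod
            (Measure.map (fun ω (i : Fin n) => ε i ω) P)))
    -- fixed covariates and responses
    (x : Fin n → Fin p → ℝ)
    (y : Fin n → Ω → ℝ)
    (hy : ∀ i ω, y i ω = (∑ l, x i l * β (c i ω) ω l) + ε i ω)
    (i j : Fin n) (hij : i ≠ j) :
    cov P (y i) (y j)
      = (∑ l, ∑ m, x i l * T l m * x j m) * (P {ω | c i ω = c j ω}).toReal := by
  obtain ⟨hlabels, hcoef⟩ := indepFun_of_map_eq_prod_prod (measurable_pi_lambda _ hc)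
    (measurable_pi_lambda _ hβ) (measurable_pi_lambda _ hε) hmut
  have hlaw (h : Fin k) (a : Fin p → ℝ) :
      P.map (fun ω ↦ a ⬝ᵥ β h ω) = gaussianReal (a ⬝ᵥ μv) (a ⬝ᵥ T *ᵥ a).toNNReal := by
    rw [← sum_sum_mul_mul_eq_dotProduct_mulVec]
    exact hβgauss h a
  have hβL2 (r : Fin n) (h : Fin k) : MemLp (fun ω ↦ x r ⬝ᵥ β h ω) 2 P :=
    memLp_two_of_map_eq_gaussianReal (hlaw h (x r))
  have hεL2 (r : Fin n) : MemLp (ε r) 2 P := memLp_two_of_map_eq_gaussianReal (hεgauss r)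
  have hε₀ (r : Fin n) : P[ε r] = 0 := integral_of_map_eq_gaussianReal (hεgauss r)
  have hZL2 (r : Fin n) (h : Fin k) : MemLp (fun ω ↦ x r ⬝ᵥ β h ω + ε r ω) 2 P :=
    (hβL2 r h).add (hεL2 r)
  have hmean (r : Fin n) (h : Fin k) : ∫ ω, x r ⬝ᵥ β h ω + ε r ω ∂P = x r ⬝ᵥ μv := by
    rw [integral_add ((hβL2 r h).integrable one_le_two) ((hεL2 r).integrable one_le_two),
      integral_of_map_eq_gaussianReal (hlaw h (x r)), hε₀, add_zero]
  have hy' (r : Fin n) : y r = fun ω ↦ x r ⬝ᵥ β (c r ω) ω + ε r ω := funext (hy r)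
  rw [hy', hy', sum_sum_mul_mul_eq_dotProduct_mulVec]
  exact cov_eval_eval_of_indepFun (hc i) (hc j)
    (hlabels.comp (φ := fun l ↦ (l i, l j))
      (ψ := fun z : (Fin k → Fin p → ℝ) × (Fin n → ℝ) ↦
        (fun h ↦ x i ⬝ᵥ z.1 h + z.2 i, fun h ↦ x j ⬝ᵥ z.1 h + z.2 j)) (by fun_prop) (by fun_prop))
    (fun h ↦ (hZL2 i h).integrable one_le_two) (fun h ↦ (hZL2 j h).integrable one_le_two)
    (fun h h' ↦ (hZL2 i h).integrable_mul (hZL2 j h')) (hmean i) (hmean j)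
    (integral_dotProduct_add_mul_dotProduct_add_of_indepFun hT hβindep hlaw hεindep hεL2 hε₀
      hcoef hij (x i) (x j))

/-- Under the clustered Gaussian regression model, for any two indices `i ≠ j` the marginal
covariance of the responses is `Cov(y i, y j) = (xᵢᵀ T xⱼ) * P(c i = c j)`. -/
theorem covariance_clustered_regression
    {Ω : Type*} [MeasurableSpace Ω] (P : Measure Ω) [IsProbabilityMeasure P]
    (n k p : ℕ) (hn : 2 ≤ n) (hk : 1 ≤ k) (hp : 1 ≤ p)
    -- random cluster labels
    (c : Fin n → Ω → Fin k) (hc : ∀ i, Measurable (c i))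
    -- cluster-specific Gaussian coefficient vectors
    (β : Fin k → Ω → (Fin p → ℝ)) (hβ : ∀ h, Measurable (β h))
    -- Gaussian errors
    (ε : Fin n → Ω → ℝ) (hε : ∀ i, Measurable (ε i))
    (μv : Fin p → ℝ) (T : Matrix (Fin p) (Fin p) ℝ) (hT : T.PosSemidef)
    (σ : ℝ) (hσ : 0 < σ)
    -- the β*'s are i.i.d. Gaussian with mean μv and covariance T :
    -- independent, identically distributed, and every linear functional is Gaussian
    (hβindep : iIndepFun β P)
    (hβident : ∀ h h', Measure.map (β h) P = Measure.map (β h') P)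
    (hβgauss : ∀ h (a : Fin p → ℝ),
      Measure.map (fun ω => ∑ l, a l * β h ω l) P
        = gaussianReal (∑ l, a l * μv l)
            (Real.toNNReal (∑ l, ∑ m, a l * T l m * a m)))
    -- the ε's are i.i.d. N(0, σ²)
    (hεindep : iIndepFun ε P)
    (hεgauss : ∀ i, Measure.map (ε i) P = gaussianReal 0 (Real.toNNReal (σ ^ 2)))
    -- the label vector, the β family and the ε family are mutually independent
    (hmut : Measure.map
        (fun ω => ((fun i => c i ω, fun h => β h ω, fun i => ε i ω) :
          (Fin n → Fin k) × (Fin k → Fin p → ℝ) × (Fin n → ℝ))) P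
      = (Measure.map (fun ω (i : Fin n) => c i ω) P).prod
          ((Measure.map (fun ω (h : Fin k) => β h ω) P).prod
            (Measure.map (fun ω (i : Fin n) => ε i ω) P)))
    -- fixed covariates and responses
    (x : Fin n → Fin p → ℝ)
    (y : Fin n → Ω → ℝ)
    (hy : ∀ i ω, y i ω = (∑ l, x i l * β (c i ω) ω l) + ε i ω)
    (i j : Fin n) (hij : i ≠ j) :
    cov P (y i) (y j)
      = (∑ l, ∑ m, x i l * T l m * x j m) * (P {ω | c i ω = c j ω}).toReal :=
  covariance_clustered_regression_general P n k p c hc β hβ ε hε μv T hT σ hβindep hβgauss hεindep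
    hεgauss hmut x y hy i j hij
end

section
/- (Proposition 1, intercept-only case) In the clustered Gaussian model without covariates, for any two indices i ≠ j the marginal correlation of the responses is Corr(y_i, y_j) = (τ²/(τ² + σ²)) · P(c_i = c_j). -/
open MeasureTheory ProbabilityTheory

/-- Variance of a real random variable. -/
noncomputable def var {Ω : Type*} [MeasurableSpace Ω] (P : Measure Ω) (f : Ω → ℝ) : ℝ :=
  cov P f f

/-- Correlation of two real random variables. -/
noncomputable def corr {Ω : Type*} [MeasurableSpace Ω] (P : Measure Ω) (f g : Ω → ℝ) : ℝ :=
  cov P f g / (Real.sqrt (var P f) * Real.sqrt (var P g))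

/-!
Conditioning on the label vector, which is independent of the intercepts and the errors, writes
`E[y_i y_j]` as the label-average of `E[(β_a + ε_i)(β_b + ε_j)] = μ² + τ²[a = b] + σ²[i = j]`
taken at `a = c_i`, `b = c_j`, while every `y_i` has mean `μ`. Hence
`Cov(y_i, y_j) = τ² P(c_i = c_j) + σ²[i = j]`; of the Gaussian laws only the first two moments
matter.
-/

open scoped NNReal

namespace ProbabilityTheory

variable {Ω : Type*} [MeasurableSpace Ω] {P : Measure Ω}

section GaussianMoments

variable {X : Ω → ℝ} {m : ℝ} {v : ℝ≥0}

lemma HasLaw.memLp_two_of_gaussianReal (hX : HasLaw X (gaussianReal m v) P) : MemLp X 2 P :=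
  (memLp_map_measure_iff aestronglyMeasurable_id hX.aemeasurable).1
    (hX.map_eq ▸ memLp_id_gaussianReal 2)

lemma HasLaw.integral_eq_of_gaussianReal (hX : HasLaw X (gaussianReal m v) P) : P[X] = m := by
  rw [hX.integral_eq, integral_id_gaussianReal]

lemma HasLaw.variance_eq_of_gaussianReal (hX : HasLaw X (gaussianReal m v) P) :
    Var[X; P] = v := by
  rw [hX.variance_eq, variance_id_gaussianReal]

end GaussianMoments

section JointLaw

variable [IsProbabilityMeasure P] {α β γ : Type*} [MeasurableSpace α] [MeasurableSpace β]
  [MeasurableSpace γ] {X : Ω → α} {Y : Ω → β} {Z : Ω → γ}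

lemma indepFun_of_map_triple_eq_prod (hX : Measurable X) (hY : Measurable Y) (hZ : Measurable Z)
    (h : P.map (fun ω ↦ (X ω, Y ω, Z ω)) = (P.map X).prod ((P.map Y).prod (P.map Z))) :
    IndepFun Y Z P := by
  rw [indepFun_iff_map_prod_eq_prod_map_map hY.aemeasurable hZ.aemeasurable]
  have := Measure.isProbabilityMeasure_map (μ := P) hX.aemeasurable
  have := congrArg (Measure.map Prod.snd) h
  rwa [Measure.map_map measurable_snd (hX.prodMk (hY.prodMk hZ)), Measure.map_snd_prod,
    measure_univ, one_smul] at this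

lemma indepFun_prodMk_of_map_triple_eq_prod (hX : Measurable X) (hY : Measurable Y)
    (hZ : Measurable Z)
    (h : P.map (fun ω ↦ (X ω, Y ω, Z ω)) = (P.map X).prod ((P.map Y).prod (P.map Z))) :
    IndepFun X (fun ω ↦ (Y ω, Z ω)) P := by
  rw [indepFun_iff_map_prod_eq_prod_map_map hX.aemeasurable (hY.prodMk hZ).aemeasurable, h,
    ← (indepFun_iff_map_prod_eq_prod_map_map hY.aemeasurable hZ.aemeasurable).1
      (indepFun_of_map_triple_eq_prod hX hY hZ h)]

end JointLaw

lemma integral_comp_eq_integral_map_of_indepFun [IsFiniteMeasure P] {α S : Type*}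
    [Fintype α] [MeasurableSpace α] [MeasurableSingletonClass α] [MeasurableSpace S]
    {X : Ω → α} {W : Ω → S}
    (hX : Measurable X) (hXW : IndepFun X W P) {G : α → S → ℝ} (hG : ∀ a, Measurable (G a))
    (hGW : ∀ a, Integrable (fun ω ↦ G a (W ω)) P) :
    ∫ ω, G (X ω) (W ω) ∂P = ∫ a, (∫ ω, G a (W ω) ∂P) ∂(P.map X) := by
  classical
  have hsplit : ∀ ω, G (X ω) (W ω) = ∑ a, ({a} : Set α).indicator 1 (X ω) * G a (W ω) :=
    fun ω ↦ by simp [Set.indicator]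
  have hind : ∀ a, Measurable (({a} : Set α).indicator (1 : α → ℝ)) := fun a ↦
    measurable_const.indicator (measurableSet_singleton a)
  have hterm : ∀ a, ∫ ω, ({a} : Set α).indicator 1 (X ω) * G a (W ω) ∂P
      = (P.map X).real {a} * ∫ ω, G a (W ω) ∂P := fun a ↦ by
    refine ((hXW.comp (hind a) (hG a)).integral_fun_mul_eq_mul_integral
      ((hind a).comp hX).aestronglyMeasurable (hGW a).aestronglyMeasurable).trans ?_
    congr 1
    rw [← integral_indicator_one (measurableSet_singleton a), integral_map hX.aemeasurable
      (hind a).aestronglyMeasurable]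
    rfl
  have hint : ∀ a, Integrable (fun ω ↦ ({a} : Set α).indicator 1 (X ω) * G a (W ω)) P :=
    fun a ↦ (hXW.comp (hind a) (hG a)).integrable_mul (Integrable.of_finite.comp_measurable hX)
      (hGW a)
  simp_rw [hsplit]
  rw [integral_finsetSum _ fun a _ ↦ hint a, integral_fintype .of_finite]
  simp only [hterm, smul_eq_mul]

lemma iIndepFun.covariance_eq_ite {ι : Type*} [DecidableEq ι] {X : ι → Ω → ℝ}
    (h : iIndepFun X P) (hX : ∀ i, MemLp (X i) 2 P) (i j : ι) :
    cov[X i, X j; P] = if i = j then Var[X i; P] else 0 := by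
  split_ifs with hij
  · subst hij
    exact covariance_self (hX i).aemeasurable
  · exact (h.indepFun hij).covariance_eq_zero (hX i) (hX j)

lemma integral_add_eq_of_integral_eq {X Y : Ω → ℝ} {m : ℝ} (hX : Integrable X P)
    (hY : Integrable Y P) (hXm : P[X] = m) (hYm : P[Y] = 0) : ∫ ω, X ω + Y ω ∂P = m := by
  rw [integral_add hX hY, hXm, hYm, add_zero]

section ClusterModel

variable [IsProbabilityMeasure P] {ι κ : Type*} [DecidableEq ι]
  {β : κ → Ω → ℝ} {ε : ι → Ω → ℝ} {m v s : ℝ}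

lemma covariance_add_add_of_indep [DecidableEq κ] (hβ : iIndepFun β P) (hε : iIndepFun ε P)
    (hβε : IndepFun (fun ω a ↦ β a ω) (fun ω i ↦ ε i ω) P)
    (hβ2 : ∀ a, MemLp (β a) 2 P) (hε2 : ∀ i, MemLp (ε i) 2 P) (a b : κ) (i j : ι) :
    cov[β a + ε i, β b + ε j; P]
      = (if a = b then Var[β a; P] else 0) + (if i = j then Var[ε i; P] else 0) := by
  have hβε' : ∀ a i, IndepFun (β a) (ε i) P := fun a i ↦
    hβε.comp (measurable_pi_apply a) (measurable_pi_apply i)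
  rw [covariance_add_left (hβ2 a) (hε2 i) ((hβ2 b).add (hε2 j)),
    covariance_add_right (hβ2 a) (hβ2 b) (hε2 j), covariance_add_right (hε2 i) (hβ2 b) (hε2 j),
    hβ.covariance_eq_ite hβ2, hε.covariance_eq_ite hε2,
    (hβε' a j).covariance_eq_zero (hβ2 a) (hε2 j),
    (hβε' b i).symm.covariance_eq_zero (hε2 i) (hβ2 b)]
  ring

lemma integral_add_mul_add_of_indep [DecidableEq κ] (hβ : iIndepFun β P) (hε : iIndepFun ε P)
    (hβε : IndepFun (fun ω a ↦ β a ω) (fun ω i ↦ ε i ω) P)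
    (hβ2 : ∀ a, MemLp (β a) 2 P) (hε2 : ∀ i, MemLp (ε i) 2 P)
    (hβm : ∀ a, P[β a] = m) (hεm : ∀ i, P[ε i] = 0) (a b : κ) (i j : ι) :
    ∫ ω, (β a ω + ε i ω) * (β b ω + ε j ω) ∂P
      = m ^ 2 + (if a = b then Var[β a; P] else 0) + (if i = j then Var[ε i; P] else 0) := by
  have hcov := covariance_eq_sub ((hβ2 a).add (hε2 i)) ((hβ2 b).add (hε2 j))
  rw [covariance_add_add_of_indep hβ hε hβε hβ2 hε2] at hcov
  simp only [Pi.mul_apply, Pi.add_apply] at hcov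
  rw [integral_add_eq_of_integral_eq ((hβ2 a).integrable one_le_two)
    ((hε2 i).integrable one_le_two) (hβm a) (hεm i), integral_add_eq_of_integral_eq
    ((hβ2 b).integrable one_le_two) ((hε2 j).integrable one_le_two) (hβm b) (hεm j)] at hcov
  linarith

variable [Fintype ι] [Fintype κ] [MeasurableSpace κ] [MeasurableSingletonClass κ] {c : ι → Ω → κ}

lemma integral_response (hc : ∀ i, Measurable (c i))
    (hL : IndepFun (fun ω i ↦ c i ω) (fun ω ↦ (fun a ↦ β a ω, fun i ↦ ε i ω)) P)
    (hβ1 : ∀ a, Integrable (β a) P) (hε1 : ∀ i, Integrable (ε i) P)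
    (hβm : ∀ a, P[β a] = m) (hεm : ∀ i, P[ε i] = 0) (i : ι) :
    ∫ ω, β (c i ω) ω + ε i ω ∂P = m := by
  have := Measure.isProbabilityMeasure_map (μ := P) (measurable_pi_lambda _ hc).aemeasurable
  refine (integral_comp_eq_integral_map_of_indepFun (measurable_pi_lambda _ hc) hL
    (G := fun C w ↦ w.1 (C i) + w.2 i) (fun C ↦ by fun_prop) (fun C ↦ ?_)).trans ?_
  · exact (hβ1 (C i)).add (hε1 i)
  · simp only [integral_add_eq_of_integral_eq (hβ1 _) (hε1 i) (hβm _) (hεm i), integral_const,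
      probReal_univ, one_smul]

lemma integral_response_mul_response [DecidableEq κ] (hc : ∀ i, Measurable (c i))
    (hL : IndepFun (fun ω i ↦ c i ω) (fun ω ↦ (fun a ↦ β a ω, fun i ↦ ε i ω)) P)
    (hβ : iIndepFun β P) (hε : iIndepFun ε P)
    (hβε : IndepFun (fun ω a ↦ β a ω) (fun ω i ↦ ε i ω) P)
    (hβ2 : ∀ a, MemLp (β a) 2 P) (hε2 : ∀ i, MemLp (ε i) 2 P)
    (hβm : ∀ a, P[β a] = m) (hεm : ∀ i, P[ε i] = 0)
    (hβv : ∀ a, Var[β a; P] = v) (hεv : ∀ i, Var[ε i; P] = s) (i j : ι) :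
    ∫ ω, (β (c i ω) ω + ε i ω) * (β (c j ω) ω + ε j ω) ∂P
      = m ^ 2 + v * P.real {ω | c i ω = c j ω} + if i = j then s else 0 := by
  have := Measure.isProbabilityMeasure_map (μ := P) (measurable_pi_lambda _ hc).aemeasurable
  refine (integral_comp_eq_integral_map_of_indepFun (measurable_pi_lambda _ hc) hL
    (G := fun C w ↦ (w.1 (C i) + w.2 i) * (w.1 (C j) + w.2 j)) (fun C ↦ by fun_prop)
    (fun C ↦ ?_)).trans ?_
  · exact ((hβ2 (C i)).add (hε2 i)).integrable_mul ((hβ2 (C j)).add (hε2 j))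
  · simp only [integral_add_mul_add_of_indep hβ hε hβε hβ2 hε2 hβm hεm, hβv, hεv]
    have hset : MeasurableSet {C : ι → κ | C i = C j} := (Set.toFinite _).measurableSet
    have hind : ∀ C : ι → κ, (if C i = C j then v else 0)
        = {C : ι → κ | C i = C j}.indicator (fun _ ↦ v) C := fun C ↦ by
      simp [Set.indicator_apply]
    simp only [hind]
    rw [integral_add .of_finite (integrable_const _),
      integral_add (integrable_const _) .of_finite, integral_indicator_const _ hset,
      integral_const, integral_const,
      map_measureReal_apply (measurable_pi_lambda _ hc) hset]
    simp [mul_comm]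

end ClusterModel

end ProbabilityTheory

theorem correlation_clustered_intercept_only_general
    {Ω : Type*} [MeasurableSpace Ω] (P : Measure Ω) [IsProbabilityMeasure P]
    (n k : ℕ)
    -- random cluster labels
    (c : Fin n → Ω → Fin k) (hc : ∀ i, Measurable (c i))
    -- cluster-specific intercepts, i.i.d. N(μ, τ²)
    (β : Fin k → Ω → ℝ) (hβ : ∀ h, Measurable (β h))
    -- Gaussian errors
    (ε : Fin n → Ω → ℝ) (hε : ∀ i, Measurable (ε i))
    (μv τ : ℝ) (σ : ℝ) (hσ : 0 < σ)
    (hβindep : iIndepFun (m := fun _ => inferInstance) β P)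
    (hβgauss : ∀ h, Measure.map (β h) P = gaussianReal μv (Real.toNNReal (τ ^ 2)))
    -- the ε's are i.i.d. N(0, σ²)
    (hεindep : iIndepFun (m := fun _ => inferInstance) ε P)
    (hεgauss : ∀ i, Measure.map (ε i) P = gaussianReal 0 (Real.toNNReal (σ ^ 2)))
    -- the label vector, the β family and the ε family are mutually independent
    (hmut : Measure.map
        (fun ω => ((fun i => c i ω, fun h => β h ω, fun i => ε i ω) :
          (Fin n → Fin k) × (Fin k → ℝ) × (Fin n → ℝ))) P
      = (Measure.map (fun ω (i : Fin n) => c i ω) P).prod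
          ((Measure.map (fun ω (h : Fin k) => β h ω) P).prod
            (Measure.map (fun ω (i : Fin n) => ε i ω) P)))
    -- responses
    (y : Fin n → Ω → ℝ)
    (hy : ∀ i ω, y i ω = β (c i ω) ω + ε i ω)
    (i j : Fin n) (hij : i ≠ j) :
    corr P (y i) (y j) = (τ ^ 2 / (τ ^ 2 + σ ^ 2)) * (P {ω | c i ω = c j ω}).toReal := by
  have hL := measurable_pi_lambda _ hc
  have hB := measurable_pi_lambda _ hβ
  have hE := measurable_pi_lambda _ hε
  have hβlaw : ∀ a, HasLaw (β a) (gaussianReal μv (τ ^ 2).toNNReal) P :=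
    fun a ↦ ⟨(hβ a).aemeasurable, hβgauss a⟩
  have hεlaw : ∀ p, HasLaw (ε p) (gaussianReal 0 (σ ^ 2).toNNReal) P :=
    fun p ↦ ⟨(hε p).aemeasurable, hεgauss p⟩
  have hβ2 := fun a ↦ (hβlaw a).memLp_two_of_gaussianReal
  have hε2 := fun p ↦ (hεlaw p).memLp_two_of_gaussianReal
  have hβm := fun a ↦ (hβlaw a).integral_eq_of_gaussianReal
  have hεm := fun p ↦ (hεlaw p).integral_eq_of_gaussianReal
  have hβv : ∀ a, Var[β a; P] = τ ^ 2 := fun a ↦ by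
    rw [(hβlaw a).variance_eq_of_gaussianReal, Real.coe_toNNReal _ (sq_nonneg τ)]
  have hεv : ∀ p, Var[ε p; P] = σ ^ 2 := fun p ↦ by
    rw [(hεlaw p).variance_eq_of_gaussianReal, Real.coe_toNNReal _ (sq_nonneg σ)]
  have hLW := indepFun_prodMk_of_map_triple_eq_prod hL hB hE hmut
  have hβε := indepFun_of_map_triple_eq_prod hL hB hE hmut
  have hcov : ∀ p q, cov P (y p) (y q)
      = τ ^ 2 * P.real {ω | c p ω = c q ω} + if p = q then σ ^ 2 else 0 := fun p q ↦ by
    simp only [cov, hy, integral_response_mul_response hc hLW hβindep hεindep hβε hβ2 hε2 hβm hεm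
      hβv hεv, integral_response hc hLW (fun a ↦ (hβ2 a).integrable one_le_two)
      (fun p ↦ (hε2 p).integrable one_le_two) hβm hεm]
    ring
  have hvar : ∀ p, var P (y p) = τ ^ 2 + σ ^ 2 := fun p ↦ by simp [var, hcov]
  rw [corr, hcov, hvar, hvar, if_neg hij, add_zero, Real.mul_self_sqrt (by positivity),
    measureReal_def]
  field_simp

/-- (Proposition 1, intercept-only case) In the clustered Gaussian model without covariates,
for any two indices `i ≠ j`, `Corr(y i, y j) = (τ²/(τ² + σ²)) · P(cᵢ = cⱼ)`. -/
theorem correlation_clustered_intercept_only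
    {Ω : Type*} [MeasurableSpace Ω] (P : Measure Ω) [IsProbabilityMeasure P]
    (n k : ℕ) (hn : 2 ≤ n) (hk : 1 ≤ k)
    -- random cluster labels
    (c : Fin n → Ω → Fin k) (hc : ∀ i, Measurable (c i))
    -- cluster-specific intercepts, i.i.d. N(μ, τ²)
    (β : Fin k → Ω → ℝ) (hβ : ∀ h, Measurable (β h))
    -- Gaussian errors
    (ε : Fin n → Ω → ℝ) (hε : ∀ i, Measurable (ε i))
    (μv τ : ℝ) (hτ : 0 < τ) (σ : ℝ) (hσ : 0 < σ)
    (hβindep : iIndepFun (m := fun _ => inferInstance) β P)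
    (hβgauss : ∀ h, Measure.map (β h) P = gaussianReal μv (Real.toNNReal (τ ^ 2)))
    -- the ε's are i.i.d. N(0, σ²)
    (hεindep : iIndepFun (m := fun _ => inferInstance) ε P)
    (hεgauss : ∀ i, Measure.map (ε i) P = gaussianReal 0 (Real.toNNReal (σ ^ 2)))
    -- the label vector, the β family and the ε family are mutually independent
    (hmut : Measure.map
        (fun ω => ((fun i => c i ω, fun h => β h ω, fun i => ε i ω) :
          (Fin n → Fin k) × (Fin k → ℝ) × (Fin n → ℝ))) P
      = (Measure.map (fun ω (i : Fin n) => c i ω) P).prod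
          ((Measure.map (fun ω (h : Fin k) => β h ω) P).prod
            (Measure.map (fun ω (i : Fin n) => ε i ω) P)))
    -- responses
    (y : Fin n → Ω → ℝ)
    (hy : ∀ i ω, y i ω = β (c i ω) ω + ε i ω)
    (i j : Fin n) (hij : i ≠ j) :
    corr P (y i) (y j) = (τ ^ 2 / (τ ^ 2 + σ ^ 2)) * (P {ω | c i ω = c j ω}).toReal :=
  correlation_clustered_intercept_only_general P n k c hc β hβ ε hε μv τ σ hσ hβindep hβgauss
    hεindep hεgauss hmut y hy i j hij
end

section
/- Under the Gaussian regression model with global regression coefficients and cluster-specific Gaussian spatial random effects, for any two indices i ≠ j the marginal covariance of the responses is Cov(y_i, y_j) = x_iᵀ T x_j + Σ_{h=1}^{k} λ_h² (H_h)_{ij} · P(c_i = c_j = h). -/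
open MeasureTheory ProbabilityTheory

/-!
Write `yᵢ = xᵢᵀβ + θᵢ + εᵢ`. Each summand is square integrable, and every summand of `yᵢ` is
independent of every summand of `yⱼ` except its own counterpart, so by bilinearity the covariance
splits into three diagonal terms. The `β`-term is `xᵢᵀ T xⱼ`, obtained by polarising the variances
of the Gaussian linear forms `aᵀβ`. The `θ`-term follows from the tower property: `θᵢ` is centred
given the labels, so `Cov(θᵢ, θⱼ) = E[E[θᵢθⱼ | labels]]`, which integrates the given mixture of
cluster indicators. The `ε`-term vanishes because `εᵢ` and `εⱼ` are independent for `i ≠ j`.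
-/

lemma Matrix.IsSymm.sum_sum_add_mul_mul_add {ι : Type*} [Fintype ι] {T : Matrix ι ι ℝ}
    (hT : T.IsSymm) (a b : ι → ℝ) :
    ∑ l, ∑ m, (a l + b l) * T l m * (a m + b m)
      = ∑ l, ∑ m, a l * T l m * a m + 2 * ∑ l, ∑ m, a l * T l m * b m
        + ∑ l, ∑ m, b l * T l m * b m := by
  have hswap : ∑ l, ∑ m, b l * T l m * a m = ∑ l, ∑ m, a l * T l m * b m := by
    rw [Finset.sum_comm]
    refine Finset.sum_congr rfl fun l _ => Finset.sum_congr rfl fun m _ => ?_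
    rw [hT.apply]
    ring
  simp only [add_mul, mul_add, Finset.sum_add_distrib, hswap]
  ring

lemma Matrix.PosSemidef.sum_sum_mul_mul_nonneg {ι : Type*} [Fintype ι] {T : Matrix ι ι ℝ}
    (hT : T.PosSemidef) (a : ι → ℝ) : 0 ≤ ∑ l, ∑ m, a l * T l m * a m := by
  simpa [dotProduct, Matrix.mulVec, Finset.mul_sum, mul_assoc] using hT.dotProduct_mulVec_nonneg a

section Probability

variable {Ω : Type*} {mΩ : MeasurableSpace Ω} {P : Measure Ω}

lemma cov_eq_covariance [IsProbabilityMeasure P] {f g : Ω → ℝ} (hf : MemLp f 2 P)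
    (hg : MemLp g 2 P) : cov P f g = cov[f, g; P] :=
  (covariance_eq_sub hf hg).symm

lemma covariance_add_add_add_of_indepFun [IsFiniteMeasure P] {X₁ X₂ X₃ Y₁ Y₂ Y₃ : Ω → ℝ}
    (hX₁ : MemLp X₁ 2 P) (hX₂ : MemLp X₂ 2 P) (hX₃ : MemLp X₃ 2 P)
    (hY₁ : MemLp Y₁ 2 P) (hY₂ : MemLp Y₂ 2 P) (hY₃ : MemLp Y₃ 2 P)
    (h₁₂ : X₁ ⟂ᵢ[P] Y₂) (h₁₃ : X₁ ⟂ᵢ[P] Y₃) (h₂₁ : X₂ ⟂ᵢ[P] Y₁) (h₂₃ : X₂ ⟂ᵢ[P] Y₃)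
    (h₃₁ : X₃ ⟂ᵢ[P] Y₁) (h₃₂ : X₃ ⟂ᵢ[P] Y₂) :
    cov[X₁ + X₂ + X₃, Y₁ + Y₂ + Y₃; P] = cov[X₁, Y₁; P] + cov[X₂, Y₂; P] + cov[X₃, Y₃; P] := by
  have hY := (hY₁.add hY₂).add hY₃
  rw [covariance_add_left (hX₁.add hX₂) hX₃ hY, covariance_add_left hX₁ hX₂ hY,
    covariance_add_right hX₁ (hY₁.add hY₂) hY₃, covariance_add_right hX₁ hY₁ hY₂,
    covariance_add_right hX₂ (hY₁.add hY₂) hY₃, covariance_add_right hX₂ hY₁ hY₂,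
    covariance_add_right hX₃ (hY₁.add hY₂) hY₃, covariance_add_right hX₃ hY₁ hY₂,
    h₁₂.covariance_eq_zero hX₁ hY₂, h₁₃.covariance_eq_zero hX₁ hY₃,
    h₂₁.covariance_eq_zero hX₂ hY₁, h₂₃.covariance_eq_zero hX₂ hY₃,
    h₃₁.covariance_eq_zero hX₃ hY₁, h₃₂.covariance_eq_zero hX₃ hY₂]
  ring

lemma covariance_eq_integral_of_condExp_eq [IsProbabilityMeasure P] {m : MeasurableSpace Ω}
    (hm : m ≤ mΩ) {f g φ : Ω → ℝ} (hf : MemLp f 2 P) (hg : MemLp g 2 P)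
    (hf₀ : P[f|m] =ᵐ[P] 0) (hfg : P[fun ω => f ω * g ω|m] =ᵐ[P] φ) :
    cov[f, g; P] = ∫ ω, φ ω ∂P := by
  have hf_mean : P[f] = 0 := by
    rw [← integral_condExp hm, integral_congr_ae hf₀]
    simp
  rw [covariance_eq_sub hf hg, hf_mean, zero_mul, sub_zero, ← integral_congr_ae hfg]
  exact (integral_condExp hm).symm

lemma integral_sum_mul_ite {ι : Type*} [IsFiniteMeasure P] [Fintype ι] {p : ι → Ω → Prop}
    [∀ h ω, Decidable (p h ω)] (hp : ∀ h, MeasurableSet {ω | p h ω}) (w : ι → ℝ) :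
    ∫ ω, ∑ h, w h * (if p h ω then 1 else 0) ∂P = ∑ h, w h * P.real {ω | p h ω} := by
  have hind : ∀ h ω, (if p h ω then (1 : ℝ) else 0) = {ω | p h ω}.indicator (fun _ => 1) ω := by
    intro h ω
    by_cases hpω : p h ω <;> simp [hpω]
  simp_rw [hind]
  rw [integral_finsetSum _ fun h _ => ((integrable_const 1).indicator (hp h)).const_mul (w h)]
  simp only [integral_const_mul, integral_indicator_const _ (hp _), smul_eq_mul, mul_one]

lemma covariance_sum_mul_of_hasLaw_gaussianReal [IsProbabilityMeasure P] {ι : Type*} [Fintype ι]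
    {β : Ω → ι → ℝ} {μ : ι → ℝ} {T : Matrix ι ι ℝ} (hT : T.PosSemidef)
    (hβ : ∀ a : ι → ℝ, HasLaw (fun ω => ∑ l, a l * β ω l)
      (gaussianReal (∑ l, a l * μ l) (∑ l, ∑ m, a l * T l m * a m).toNNReal) P)
    (a b : ι → ℝ) :
    cov[fun ω => ∑ l, a l * β ω l, fun ω => ∑ l, b l * β ω l; P]
      = ∑ l, ∑ m, a l * T l m * b m := by
  have hL2 : ∀ a : ι → ℝ, MemLp (fun ω => ∑ l, a l * β ω l) 2 P := fun a =>
    (hβ a).hasGaussianLaw.memLp_two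
  have hvar : ∀ a : ι → ℝ, Var[fun ω => ∑ l, a l * β ω l; P] = ∑ l, ∑ m, a l * T l m * a m :=
    fun a => by
      rw [(hβ a).variance_eq, variance_id_gaussianReal,
        Real.coe_toNNReal _ (hT.sum_sum_mul_mul_nonneg a)]
  have hadd : (fun ω => ∑ l, (a l + b l) * β ω l)
      = (fun ω => ∑ l, a l * β ω l) + fun ω => ∑ l, b l * β ω l := by
    ext ω
    simp [add_mul, Finset.sum_add_distrib]
  have hpolar := variance_add (hL2 a) (hL2 b)
  rw [← hadd, hvar (fun l => a l + b l), hvar a, hvar b,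
    (Matrix.isHermitian_iff_isSymm.mp hT.1).sum_sum_add_mul_mul_add] at hpolar
  linarith

end Probability

theorem covariance_global_regression_local_spatial_general
    {Ω : Type*} [MeasurableSpace Ω] (P : Measure Ω) [IsProbabilityMeasure P]
    (n k p : ℕ)
    -- random cluster labels
    (c : Fin n → Ω → Fin k) (hc : ∀ i, Measurable (c i))
    -- global Gaussian coefficient vector β ~ N(μv, T)
    (β : Ω → (Fin p → ℝ)) (hβ : Measurable β)
    -- Gaussian errors
    (ε : Fin n → Ω → ℝ) (hε : ∀ i, Measurable (ε i))
    -- cluster-specific spatial random effects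
    (θ : Fin n → Ω → ℝ)
    (μv : Fin p → ℝ) (T : Matrix (Fin p) (Fin p) ℝ) (hT : T.PosSemidef)
    (σ : ℝ)
    (lam : Fin k → ℝ)
    (H : Fin k → Matrix (Fin n) (Fin n) ℝ)
    -- β is Gaussian with mean μv and covariance T
    (hβgauss : ∀ a : Fin p → ℝ,
      Measure.map (fun ω => ∑ l, a l * β ω l) P
        = gaussianReal (∑ l, a l * μv l)
            (Real.toNNReal (∑ l, ∑ m, a l * T l m * a m)))
    -- the ε's are i.i.d. N(0, σ²)
    (hεindep : iIndepFun ε P)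
    (hεgauss : ∀ i, Measure.map (ε i) P = gaussianReal 0 (Real.toNNReal (σ ^ 2)))
    -- the θ's are square integrable with the prescribed conditional moments given the labels
    (hθL2 : ∀ i, MemLp (θ i) 2 P)
    (hθcond1 : ∀ i, P[θ i |
      MeasurableSpace.comap (fun ω (i' : Fin n) => c i' ω) inferInstance] =ᵐ[P] 0)
    (hθcond2 : ∀ i j, P[fun ω => θ i ω * θ j ω |
      MeasurableSpace.comap (fun ω (i' : Fin n) => c i' ω) inferInstance]
      =ᵐ[P] fun ω => ∑ h, (lam h) ^ 2 * H h i j * (if c i ω = h ∧ c j ω = h then (1 : ℝ) else 0))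
    -- β is independent of (labels, θ)
    (hβind : IndepFun β (fun ω => ((fun i => c i ω, fun i => θ i ω) :
      (Fin n → Fin k) × (Fin n → ℝ))) P)
    -- the ε family is independent of (labels, θ, β)
    (hεind : IndepFun (fun ω (i : Fin n) => ε i ω)
      (fun ω => ((fun i => c i ω, fun i => θ i ω, β ω) :
        (Fin n → Fin k) × (Fin n → ℝ) × (Fin p → ℝ))) P)
    -- fixed covariates and responses
    (x : Fin n → Fin p → ℝ)
    (y : Fin n → Ω → ℝ)
    (hy : ∀ i ω, y i ω = (∑ l, x i l * β ω l) + θ i ω + ε i ω)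
    (i j : Fin n) (hij : i ≠ j) :
    cov P (y i) (y j)
      = (∑ l, ∑ m, x i l * T l m * x j m)
        + ∑ h, (lam h) ^ 2 * H h i j * (P {ω | c i ω = h ∧ c j ω = h}).toReal := by
  set f : Fin n → Ω → ℝ := fun i ω => ∑ l, x i l * β ω l
  have hy' : ∀ i, y i = f i + θ i + ε i := fun i => funext (hy i)
  have hβlaw : ∀ a : Fin p → ℝ, HasLaw (fun ω => ∑ l, a l * β ω l)
      (gaussianReal (∑ l, a l * μv l) (∑ l, ∑ m, a l * T l m * a m).toNNReal) P :=
    fun a => ⟨by fun_prop, hβgauss a⟩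
  have hfL2 : ∀ i, MemLp (f i) 2 P := fun i => (hβlaw (x i)).hasGaussianLaw.memLp_two
  have hεL2 : ∀ i, MemLp (ε i) 2 P := fun i =>
    (HasLaw.hasGaussianLaw ⟨(hε i).aemeasurable, hεgauss i⟩).memLp_two
  have hyL2 : ∀ i, MemLp (y i) 2 P := fun i => hy' i ▸ ((hfL2 i).add (hθL2 i)).add (hεL2 i)
  have hfθ : ∀ a b, f a ⟂ᵢ[P] θ b := fun a b =>
    hβind.comp (φ := fun q : Fin p → ℝ => ∑ l, x a l * q l)
      (ψ := fun q : (Fin n → Fin k) × (Fin n → ℝ) => q.2 b) (by fun_prop) (by fun_prop)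
  have hεf : ∀ a b, ε a ⟂ᵢ[P] f b := fun a b =>
    hεind.comp (φ := fun q : Fin n → ℝ => q a)
      (ψ := fun q : (Fin n → Fin k) × (Fin n → ℝ) × (Fin p → ℝ) => ∑ l, x b l * q.2.2 l)
      (by fun_prop) (by fun_prop)
  have hεθ : ∀ a b, ε a ⟂ᵢ[P] θ b := fun a b =>
    hεind.comp (φ := fun q : Fin n → ℝ => q a)
      (ψ := fun q : (Fin n → Fin k) × (Fin n → ℝ) × (Fin p → ℝ) => q.2.1 b)
      (by fun_prop) (by fun_prop)
  have hlabels : MeasurableSpace.comap (fun ω (i' : Fin n) => c i' ω) inferInstance ≤ ‹_› :=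
    (measurable_pi_lambda _ hc).comap_le
  rw [cov_eq_covariance (hyL2 i) (hyL2 j), hy' i, hy' j,
    covariance_add_add_add_of_indepFun (hfL2 i) (hθL2 i) (hεL2 i) (hfL2 j) (hθL2 j) (hεL2 j)
      (hfθ i j) (hεf j i).symm (hfθ j i).symm (hεθ j i).symm (hεf i j) (hεθ i j),
    covariance_sum_mul_of_hasLaw_gaussianReal hT hβlaw,
    covariance_eq_integral_of_condExp_eq hlabels (hθL2 i) (hθL2 j) (hθcond1 i) (hθcond2 i j),
    integral_sum_mul_ite (p := fun h ω => c i ω = h ∧ c j ω = h) fun h =>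
      (hc i (measurableSet_singleton h)).inter (hc j (measurableSet_singleton h)),
    (hεindep.indepFun hij).covariance_eq_zero (hεL2 i) (hεL2 j)]
  simp [measureReal_def, mul_assoc]

/-- Under the Gaussian regression model with global regression coefficients and
cluster-specific Gaussian spatial random effects, for any two indices `i ≠ j`,
`Cov(y i, y j) = xᵢᵀ T xⱼ + ∑ₕ λₕ² (Hₕ)ᵢⱼ · P(cᵢ = cⱼ = h)`. -/
theorem covariance_global_regression_local_spatial
    {Ω : Type*} [MeasurableSpace Ω] (P : Measure Ω) [IsProbabilityMeasure P]
    (n k p : ℕ) (hn : 2 ≤ n) (hk : 1 ≤ k) (hp : 1 ≤ p)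
    -- random cluster labels
    (c : Fin n → Ω → Fin k) (hc : ∀ i, Measurable (c i))
    -- global Gaussian coefficient vector β ~ N(μv, T)
    (β : Ω → (Fin p → ℝ)) (hβ : Measurable β)
    -- Gaussian errors
    (ε : Fin n → Ω → ℝ) (hε : ∀ i, Measurable (ε i))
    -- cluster-specific spatial random effects
    (θ : Fin n → Ω → ℝ) (hθ : ∀ i, Measurable (θ i))
    (μv : Fin p → ℝ) (T : Matrix (Fin p) (Fin p) ℝ) (hT : T.PosSemidef)
    (σ : ℝ) (hσ : 0 < σ)
    (lam : Fin k → ℝ) (hlam : ∀ h, 0 < lam h)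
    (H : Fin k → Matrix (Fin n) (Fin n) ℝ) (hH : ∀ h, (H h).PosSemidef)
    (hHdiag : ∀ h i, H h i i = 1)
    -- β is Gaussian with mean μv and covariance T
    (hβgauss : ∀ a : Fin p → ℝ,
      Measure.map (fun ω => ∑ l, a l * β ω l) P
        = gaussianReal (∑ l, a l * μv l)
            (Real.toNNReal (∑ l, ∑ m, a l * T l m * a m)))
    -- the ε's are i.i.d. N(0, σ²)
    (hεindep : iIndepFun ε P)
    (hεgauss : ∀ i, Measure.map (ε i) P = gaussianReal 0 (Real.toNNReal (σ ^ 2)))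
    -- the θ's are square integrable with the prescribed conditional moments given the labels
    (hθL2 : ∀ i, MemLp (θ i) 2 P)
    (hθcond1 : ∀ i, P[θ i |
      MeasurableSpace.comap (fun ω (i' : Fin n) => c i' ω) inferInstance] =ᵐ[P] 0)
    (hθcond2 : ∀ i j, P[fun ω => θ i ω * θ j ω |
      MeasurableSpace.comap (fun ω (i' : Fin n) => c i' ω) inferInstance]
      =ᵐ[P] fun ω => ∑ h, (lam h) ^ 2 * H h i j * (if c i ω = h ∧ c j ω = h then (1 : ℝ) else 0))
    -- β is independent of (labels, θ)
    (hβind : IndepFun β (fun ω => ((fun i => c i ω, fun i => θ i ω) :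
      (Fin n → Fin k) × (Fin n → ℝ))) P)
    -- the ε family is independent of (labels, θ, β)
    (hεind : IndepFun (fun ω (i : Fin n) => ε i ω)
      (fun ω => ((fun i => c i ω, fun i => θ i ω, β ω) :
        (Fin n → Fin k) × (Fin n → ℝ) × (Fin p → ℝ))) P)
    -- fixed covariates and responses
    (x : Fin n → Fin p → ℝ)
    (y : Fin n → Ω → ℝ)
    (hy : ∀ i ω, y i ω = (∑ l, x i l * β ω l) + θ i ω + ε i ω)
    (i j : Fin n) (hij : i ≠ j) :
    cov P (y i) (y j)
      = (∑ l, ∑ m, x i l * T l m * x j m)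
        + ∑ h, (lam h) ^ 2 * H h i j * (P {ω | c i ω = h ∧ c j ω = h}).toReal :=
  covariance_global_regression_local_spatial_general P n k p c hc β hβ ε hε θ μv T hT σ lam H
    hβgauss hεindep hεgauss hθL2 hθcond1 hθcond2 hβind hεind x y hy i j hij
end
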